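/- Let F be a finite field with q = p^s elements and K ⊆ F a subfield with p^ℓ elements. Let m₁,…,m_n be positive integers and b₁,…,b_n ∈ F*. If ∑_{j=1}^n 1/gcd(m_j, p^ℓ - 1) > (q-1)/(p^ℓ - 1), then the equation b₁X₁^{m₁} + … + b_nX_n^{m_n} = 0 has a nontrivial solution with all X_j ∈ K. -/

import Mathlib

/-!
Let `S j = {b j * y ^ m j | y ∈ K}`; it contains `0`, and its nonzero part is a multiplicative
translate of the group of `m j`-th powers in the cyclic group `Kˣ`, so it has
`(|K| - 1) / gcd (m j) (|K| - 1)` elements. If no nontrivial choice from the `S j` summed to zero,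
each partial sumset `W = S 0 + ⋯ + S (k-1)` would avoid `-(S k \ {0})`, and then
`|W + S k| ≥ |W| + |S k \ {0}|`: split `F` into the lines `𝔽_p • v` through `0`, which meet only
in `0`, and apply Cauchy–Davenport in `𝔽_p` on each line. Hence
`|F| ≥ |S 0 + ⋯ + S (n-1)| ≥ 1 + ∑ j, |S j \ {0}|`, and the hypothesis says the right side
exceeds `q`.
-/

open scoped Classical

open scoped Pointwise
open Finset

theorem Finset.add_insert_zero {G : Type*} [AddZeroClass G] [DecidableEq G] (A B : Finset G) :
    A + insert 0 B = A ∪ (A + B) := by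
  rw [insert_eq, add_union, singleton_zero, add_zero]

theorem ZMod.card_le_card_add_sdiff {p : ℕ} [Fact p.Prime] {A B : Finset (ZMod p)}
    (h0A : 0 ∈ A) (hAB : ∀ a ∈ A, ∀ b ∈ B, a + b ≠ 0) : #B ≤ #((A + B) \ A) := by
  have hdisj : Disjoint A (-B) := disjoint_left.2 fun a ha hneg =>
    hAB a ha (-a) (by simpa using hneg) (add_neg_cancel a)
  have hsize : #A + #B ≤ p := by
    simpa [card_union_of_disjoint hdisj] using card_le_univ (A ∪ -B)
  have h0B : 0 ∉ B := fun h => hAB 0 h0A 0 h (add_zero 0)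
  have hcd := ZMod.cauchy_davenport (Fact.out : p.Prime) ⟨0, h0A⟩ (insert_nonempty 0 B)
  rw [add_insert_zero, card_insert_of_notMem h0B, union_comm, ← card_sdiff_add_card] at hcd
  omega

section ZModModule

variable {V : Type*} [AddCommGroup V] [DecidableEq V]

theorem Finset.card_filter_span_le_card_filter_span {p : ℕ} [Fact p.Prime] [Module (ZMod p) V]
    {W H : Finset V} (h0W : 0 ∈ W) (hWH : ∀ w ∈ W, ∀ h ∈ H, w + h ≠ 0) {v : V} (hv : v ≠ 0) :
    #{h ∈ H | (ZMod p ∙ h) = (ZMod p ∙ v)} ≤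
      #{x ∈ (W + H) \ W | (ZMod p ∙ x) = (ZMod p ∙ v)} := by
  set ψ : ZMod p →+ V := (LinearMap.toSpanSingleton (ZMod p) V v).toAddMonoidHom
  have hψ : Function.Injective ψ := smul_left_injective (ZMod p) hv
  set A := W.preimage ψ hψ.injOn
  set B := H.preimage ψ hψ.injOn
  have h0A : 0 ∈ A := by simpa [A] using h0W
  have hAB : ∀ a ∈ A, ∀ b ∈ B, a + b ≠ 0 := fun a ha b hb hab =>
    hWH _ (mem_preimage.1 ha) _ (mem_preimage.1 hb) (by rw [← map_add, hab, map_zero])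
  calc #{h ∈ H | (ZMod p ∙ h) = (ZMod p ∙ v)}
      ≤ #(B.image ψ) := card_le_card fun h hh => by
        obtain ⟨hH, hspan⟩ := mem_filter.1 hh
        have : h ∈ ZMod p ∙ v := hspan ▸ Submodule.mem_span_singleton_self h
        obtain ⟨μ, rfl⟩ := Submodule.mem_span_singleton.1 this
        exact mem_image_of_mem ψ (mem_preimage.2 hH)
    _ ≤ #B := card_image_le
    _ ≤ #((A + B) \ A) := ZMod.card_le_card_add_sdiff h0A hAB
    _ = #(((A + B) \ A).image ψ) := (card_image_of_injective _ hψ).symm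
    _ ≤ _ := card_le_card fun x hx => by
        obtain ⟨c, hc, rfl⟩ := mem_image.1 hx
        obtain ⟨hcAB, hcA⟩ := mem_sdiff.1 hc
        obtain ⟨a, ha, b, hb, rfl⟩ := mem_add.1 hcAB
        have hc0 : a + b ≠ 0 := fun h => hcA (h ▸ h0A)
        refine mem_filter.2 ⟨mem_sdiff.2 ⟨?_, fun h => hcA (mem_preimage.2 h)⟩, ?_⟩
        · rw [map_add]
          exact add_mem_add (mem_preimage.1 ha) (mem_preimage.1 hb)
        · exact Submodule.span_singleton_smul_eq hc0.isUnit v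

theorem Finset.card_le_card_add_sdiff (p : ℕ) [Fact p.Prime] [Module (ZMod p) V]
    {W H : Finset V} (h0W : 0 ∈ W) (hWH : ∀ w ∈ W, ∀ h ∈ H, w + h ≠ 0) : #H ≤ #((W + H) \ W) := by
  set line : V → Submodule (ZMod p) V := fun x => ZMod p ∙ x
  calc #H = ∑ L ∈ H.image line, #{h ∈ H | line h = L} := card_eq_sum_card_image line H
    _ ≤ ∑ L ∈ H.image line, #{x ∈ (W + H) \ W | line x = L} := sum_le_sum fun L hL => by
        obtain ⟨v, hv, rfl⟩ := mem_image.1 hL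
        exact card_filter_span_le_card_filter_span h0W hWH fun h => hWH 0 h0W v hv (by simp [h])
    _ = #{x ∈ (W + H) \ W | line x ∈ H.image line} := sum_card_fiberwise_eq_card_filter _ _ _
    _ ≤ #((W + H) \ W) := card_filter_le _ _

theorem Finset.mem_fintype_sum {ι V : Type*} [Fintype ι] [AddCommMonoid V] [DecidableEq V]
    (S : ι → Finset V) (a : V) :
    a ∈ ∑ i, S i ↔ ∃ x : ι → V, (∀ i, x i ∈ S i) ∧ ∑ i, x i = a := by
  rw [← mem_coe, coe_sum, Set.mem_fintype_sum]
  simp only [mem_coe, exists_prop]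

theorem Finset.one_add_sum_card_erase_zero_le_card_sum (p : ℕ) [Fact p.Prime]
    [Module (ZMod p) V] {n : ℕ} (S : Fin n → Finset V) (h0 : ∀ i, 0 ∈ S i)
    (hS : ∀ x : Fin n → V, (∀ i, x i ∈ S i) → ∑ i, x i = 0 → x = 0) :
    1 + ∑ i, #((S i).erase 0) ≤ #(∑ i, S i) := by
  induction n with
  | zero => simp
  | succ n ih =>
    rw [Fin.sum_univ_succ, Fin.sum_univ_succ]
    set W := ∑ i : Fin n, S i.succ
    have hW : 1 + ∑ i : Fin n, #((S i.succ).erase 0) ≤ #W := by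
      refine ih (fun i => S i.succ) (fun i => h0 _) fun x hx hsum => funext fun i => ?_
      have := hS (Fin.cons 0 x) (Fin.cases (h0 0) hx) (by rw [Fin.sum_cons, hsum, add_zero])
      simpa using congrFun this i.succ
    have h0W : 0 ∈ W := (mem_fintype_sum _ _).2 ⟨0, fun i => h0 _, sum_const_zero⟩
    have hgain := card_le_card_add_sdiff p (H := (S 0).erase 0) h0W fun w hw s hs hws => by
      obtain ⟨x, hx, rfl⟩ := (mem_fintype_sum _ _).1 hw
      have := hS (Fin.cons s x) (Fin.cases (mem_of_mem_erase hs) hx)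
        (by rw [Fin.sum_cons, add_comm, hws])
      exact ne_of_mem_erase hs (by simpa using congrFun this 0)
    have hsub : (W + (S 0).erase 0) \ W ⊆ (S 0 + W) \ W := by
      rw [add_comm W]
      exact sdiff_subset_sdiff (add_subset_add (erase_subset _ _) Subset.rfl) Subset.rfl
    have := card_sdiff_add_card_eq_card (subset_add_right W (h0 0))
    have := card_le_card hsub
    omega

theorem Finset.exists_ne_zero_sum_eq_zero_of_card_le (p : ℕ) [Fact p.Prime]
    [Module (ZMod p) V] [Fintype V] {n : ℕ} (S : Fin n → Finset V) (h0 : ∀ i, 0 ∈ S i)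
    (hcard : Fintype.card V ≤ ∑ i, #((S i).erase 0)) :
    ∃ x : Fin n → V, (∀ i, x i ∈ S i) ∧ x ≠ 0 ∧ ∑ i, x i = 0 := by
  by_contra! hS
  have := one_add_sum_card_erase_zero_le_card_sum p S h0 fun x hx hsum =>
    by_contra fun hx0 => hS x hx hx0 hsum
  have := card_le_univ (∑ i, S i)
  omega

end ZModModule

theorem FiniteField.card_image_pow_units_mul_gcd (K : Type*) [Field K] [Fintype K]
    [DecidableEq K] (m : ℕ) :
    #((univ : Finset Kˣ).image (fun u : Kˣ => u ^ m)) * Nat.gcd m (Fintype.card K - 1) =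
      Fintype.card K - 1 := by
  have hrange : #((univ : Finset Kˣ).image (fun u : Kˣ => u ^ m)) =
      Nat.card (powMonoidHom m : Kˣ →* Kˣ).range := by
    rw [← SetLike.coe_sort_coe, MonoidHom.coe_range, Nat.card_eq_card_toFinset,
      Set.toFinset_range]
    rfl
  rw [hrange, IsCyclic.card_powMonoidHom_range, Nat.card_eq_fintype_card, Fintype.card_units,
    Nat.gcd_comm, Nat.div_mul_cancel (Nat.gcd_dvd_right _ _)]

theorem Subfield.card_sub_one_le_card_image_mul_gcd {F : Type*} [Field F] [DecidableEq F]
    (K : Subfield F) [Fintype K] {b : F} (hb : b ≠ 0) (m : ℕ) :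
    Fintype.card K - 1 ≤
      #(((univ : Finset K).image fun y : K => b * (y : F) ^ m).erase 0) *
        Nat.gcd m (Fintype.card K - 1) := by
  have hinj : Function.Injective fun u : Kˣ => b * ((u : K) : F) :=
    fun u v h => Units.ext (Subtype.ext (mul_left_cancel₀ hb h))
  have hsub : ((univ : Finset Kˣ).image (fun u : Kˣ => u ^ m)).image
      (fun u : Kˣ => b * ((u : K) : F)) ⊆
      ((univ : Finset K).image fun y : K => b * (y : F) ^ m).erase 0 := by
    intro x hx
    obtain ⟨_, hu, rfl⟩ := mem_image.1 hx
    obtain ⟨v, -, rfl⟩ := mem_image.1 hu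
    refine mem_erase.2 ⟨mul_ne_zero hb fun h => (v ^ m).ne_zero (Subtype.ext h), ?_⟩
    exact mem_image.2
      ⟨(v : K), mem_univ _, by rw [Units.val_pow_eq_pow_val, SubmonoidClass.coe_pow]⟩
  have hpow := card_le_card hsub
  rw [card_image_of_injective _ hinj] at hpow
  calc Fintype.card K - 1
      = #((univ : Finset Kˣ).image (fun u : Kˣ => u ^ m)) * Nat.gcd m (Fintype.card K - 1) :=
        (FiniteField.card_image_pow_units_mul_gcd K m).symm
    _ ≤ _ := Nat.mul_le_mul_right _ hpow

theorem Nat.le_sum_of_div_lt_sum_one_div {ι : Type*} (s : Finset ι) {a Q : ℕ} {c d : ι → ℕ}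
    (hQ : 2 ≤ Q) (hcd : ∀ i ∈ s, Q - 1 ≤ c i * d i)
    (h : ((a : ℚ) - 1) / ((Q : ℚ) - 1) < ∑ i ∈ s, 1 / (d i : ℚ)) : a ≤ ∑ i ∈ s, c i := by
  have hQ1 : (0 : ℚ) < Q - 1 := by
    have : (2 : ℚ) ≤ Q := by exact_mod_cast hQ
    linarith
  have hbound : ∑ i ∈ s, 1 / (d i : ℚ) ≤ (∑ i ∈ s, (c i : ℚ)) / ((Q : ℚ) - 1) := by
    rw [sum_div]
    refine sum_le_sum fun i hi => ?_
    have hd : 0 < d i := Nat.pos_of_ne_zero fun h => by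
      have := hcd i hi
      rw [h, mul_zero] at this
      omega
    rw [div_le_div_iff₀ (by exact_mod_cast hd) hQ1, one_mul]
    have : ((Q - 1 : ℕ) : ℚ) ≤ (c i * d i : ℕ) := by exact_mod_cast hcd i hi
    push_cast [Nat.cast_sub (by omega : 1 ≤ Q)] at this
    linarith
  have := (div_lt_div_iff_of_pos_right hQ1).1 (h.trans_le hbound)
  have : (a : ℚ) < ((∑ i ∈ s, c i : ℕ) : ℚ) + 1 := by push_cast; linarith
  have : a < ∑ i ∈ s, c i + 1 := by exact_mod_cast this
  omega

theorem stmt_17_general (F : Type*) [Field F] [Fintype F] (p ℓ q n : ℕ)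
    (hq : Fintype.card F = q) (K : Subfield F)
    (hK : Fintype.card (K : Set F) = p ^ ℓ)
    (m : Fin n → ℕ) (hm : ∀ j, 0 < m j) (b : Fin n → F) (hb : ∀ j, b j ≠ 0)
    (hineq : ((q : ℚ) - 1) / ((p : ℚ) ^ ℓ - 1)
      < ∑ j, (1 : ℚ) / Nat.gcd (m j) (p ^ ℓ - 1)) :
    ∃ x : Fin n → F, x ≠ 0 ∧ (∀ j, x j ∈ K) ∧ ∑ j, b j * x j ^ m j = 0 := by
  obtain ⟨r, _⟩ := CharP.exists F
  have := Fact.mk (CharP.char_is_prime F r)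
  let := ZMod.algebra F r
  have hK' : Fintype.card K = p ^ ℓ := hK
  set S : Fin n → Finset F := fun j => (univ : Finset K).image fun y : K => b j * (y : F) ^ m j
  have h0S : ∀ j, 0 ∈ S j := fun j =>
    mem_image.2 ⟨0, mem_univ _, by simp [(hm j).ne']⟩
  have hcard : Fintype.card F ≤ ∑ j, #((S j).erase 0) := by
    rw [hq]
    refine Nat.le_sum_of_div_lt_sum_one_div univ (Q := p ^ ℓ)
      (d := fun j => Nat.gcd (m j) (p ^ ℓ - 1)) ?_ (fun j _ => ?_) ?_
    · rw [← hK']; exact Fintype.one_lt_card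
    · exact hK' ▸ (K.card_sub_one_le_card_image_mul_gcd (hb j) (m j))
    · exact_mod_cast hineq
  obtain ⟨x, hxS, hx0, hsum⟩ := exists_ne_zero_sum_eq_zero_of_card_le r S h0S hcard
  choose y hy using fun j => mem_image.1 (hxS j)
  refine ⟨fun j => y j, fun hy0 => hx0 (funext fun j => ?_), fun j => (y j).2, ?_⟩
  · rw [← (hy j).2, show (y j : F) = 0 from congrFun hy0 j, zero_pow (hm j).ne', mul_zero,
      Pi.zero_apply]
  · simpa only [(hy _).2] using hsum

/-- Theorem 3 (homogeneous case): nontrivial subfield solutions. -/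
theorem stmt_17 (F : Type*) [Field F] [Fintype F] (p s ℓ q n : ℕ) (hp : p.Prime)
    (hq : Fintype.card F = q) (hqs : q = p ^ s) (K : Subfield F)
    (hK : Fintype.card (K : Set F) = p ^ ℓ)
    (m : Fin n → ℕ) (hm : ∀ j, 0 < m j) (b : Fin n → F) (hb : ∀ j, b j ≠ 0)
    (hineq : ((q : ℚ) - 1) / ((p : ℚ) ^ ℓ - 1)
      < ∑ j, (1 : ℚ) / Nat.gcd (m j) (p ^ ℓ - 1)) :
    ∃ x : Fin n → F, x ≠ 0 ∧ (∀ j, x j ∈ K) ∧ ∑ j, b j * x j ^ m j = 0 :=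
  stmt_17_general F p ℓ q n hq K hK m hm b hb hineq
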